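/- arXiv:2008.13676 — 5 statements merged into one kernel-verified Lean document; each statement's English description precedes it below -/
import Mathlib

section
/- For every w = (w₀,w₁,w₂,w₃) ∈ ℂ⁴ ∖ {0}: (a) τ(w) has unit norm in ℝ⊕ℂ⊕ℂ; (b) τ(λw) = τ(w) for every λ ∈ ℂ ∖ {0}; and (c) for every α ∈ ℝ, τ(w₀, e^{iα}w₁, e^{2iα}w₂, e^{3iα}w₃) = R_α · τ(w), where R_α acts on ℝ⊕ℂ⊕ℂ by R_α·(t,ζ₁,ζ₂) = (t, e^{iα}ζ₁, e^{2iα}ζ₂). In other words, the twistor fibration τ: ℂP³ → S⁴ is well defined and S¹-equivariant. -/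
noncomputable section

open MeasureTheory
open scoped Classical

abbrev E3 : Type := EuclideanSpace ℝ (Fin 3)

abbrev V5 : Type := ℝ × ℂ × ℂ

/-- Squared Euclidean norm on ℝ ⊕ ℂ ⊕ ℂ. -/
def nsq (p : V5) : ℝ := p.1 ^ 2 + Complex.normSq p.2.1 + Complex.normSq p.2.2

/-- Real inner product on ℝ ⊕ ℂ ⊕ ℂ. -/
def vdot (p q : V5) : ℝ :=
  p.1 * q.1 + (p.2.1 * (starRingEnd ℂ) q.2.1).re + (p.2.2 * (starRingEnd ℂ) q.2.2).re

/-- The circle action R_α · (t, ζ₁, ζ₂) = (t, e^{iα}ζ₁, e^{2iα}ζ₂) on ℝ ⊕ ℂ ⊕ ℂ. -/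
def circAct (α : ℝ) (p : V5) : V5 :=
  (p.1, Complex.exp (Complex.I * (α : ℂ)) * p.2.1,
    Complex.exp (2 * Complex.I * (α : ℂ)) * p.2.2)

/-- Rotation of ℝ³ by angle α about the x₃-axis. -/
def rot3 (α : ℝ) (x : E3) : E3 :=
  EuclideanSpace.single (0 : Fin 3) (Real.cos α * x 0 - Real.sin α * x 1) +
    EuclideanSpace.single (1 : Fin 3) (Real.sin α * x 0 + Real.cos α * x 1) +
    EuclideanSpace.single (2 : Fin 3) (x 2)

/-- The unit sphere S² ⊂ ℝ³. -/
def sphere2 : Set E3 := Metric.sphere (0 : E3) 1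

def northPole : E3 := EuclideanSpace.single (2 : Fin 3) (1 : ℝ)

def southPole : E3 := EuclideanSpace.single (2 : Fin 3) (-1 : ℝ)

/-- Degree-zero homogeneous extension of a map defined on the sphere. -/
def homExt (ω : E3 → V5) : E3 → V5 := fun x => ω (‖x‖⁻¹ • x)

def homExtR (g : E3 → ℝ) : E3 → ℝ := fun x => g (‖x‖⁻¹ • x)

/-- Squared Euclidean norm of the differential. -/
def gradSq (f : E3 → V5) (x : E3) : ℝ :=
  ∑ i : Fin 3, nsq (fderiv ℝ f x (EuclideanSpace.single i (1 : ℝ)))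

def gradSqR (f : E3 → ℝ) (x : E3) : ℝ :=
  ∑ i : Fin 3, fderiv ℝ f x (EuclideanSpace.single i (1 : ℝ)) ^ 2

/-- Componentwise Euclidean Laplacian. -/
def lap (f : E3 → V5) (x : E3) : V5 :=
  ∑ i : Fin 3,
    fderiv ℝ (fun y => fderiv ℝ f y (EuclideanSpace.single i (1 : ℝ))) x
      (EuclideanSpace.single i (1 : ℝ))

/-- ω : S² → S⁴ is a (smooth) harmonic sphere: it maps the sphere into the unit
sphere of ℝ ⊕ ℂ ⊕ ℂ, its degree-zero homogeneous extension Q is smooth away from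
the origin, and ΔQ + |∇Q|²Q = 0 on ℝ³ ∖ {0}. -/
def IsHarmonicSphere (ω : E3 → V5) : Prop :=
  (∀ x ∈ sphere2, nsq (ω x) = 1) ∧
    ContDiffOn ℝ (⊤ : ℕ∞) (homExt ω) {(0 : E3)}ᶜ ∧
    ∀ x : E3, x ≠ 0 → lap (homExt ω) x + gradSq (homExt ω) x • homExt ω x = 0

/-- S¹-equivariance of a sphere map. -/
def EquivariantS (ω : E3 → V5) : Prop :=
  ∀ α : ℝ, ∀ x ∈ sphere2, ω (rot3 α x) = circAct α (ω x)

/-- S¹-equivariance of a vector field on ℝ³. -/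
def EquivariantV (X : E3 → V5) : Prop :=
  ∀ (α : ℝ) (x : E3), X (rot3 α x) = circAct α (X x)

/-- Tangential part X_T = X - (w·X)w. -/
def tangPart (w X : E3 → V5) : E3 → V5 := fun x => X x - vdot (w x) (X x) • w x

/-- Second variation δ²E₀(w)[X] = ∫ (|∇X_T|² - |∇w|²|X_T|²). -/
def secondVar (w X : E3 → V5) : ℝ :=
  ∫ x : E3, (gradSq (tangPart w X) x - gradSq w x * nsq (tangPart w X x))

/-- Stability of a tangent map within the S¹-equivariant class. -/
def IsStable (w : E3 → V5) : Prop :=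
  ∀ X : E3 → V5, ContDiff ℝ (⊤ : ℕ∞) X → HasCompactSupport X → EquivariantV X →
    0 ≤ secondVar w X

def conj' (z : ℂ) : ℂ := (starRingEnd ℂ) z

/-- The twistor fibration, in homogeneous coordinates on ℂ⁴ ∖ {0}. -/
def tau4 (w0 w1 w2 w3 : ℂ) : V5 :=
  ((Complex.normSq w0 + Complex.normSq w3 - Complex.normSq w1 - Complex.normSq w2) /
      (Complex.normSq w0 + Complex.normSq w1 + Complex.normSq w2 + Complex.normSq w3),
    2 * (conj' w0 * w1 + conj' w2 * w3) /
      ((Complex.normSq w0 + Complex.normSq w1 + Complex.normSq w2 + Complex.normSq w3 : ℝ) : ℂ),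
    2 * (conj' w0 * w2 - conj' w1 * w3) /
      ((Complex.normSq w0 + Complex.normSq w1 + Complex.normSq w2 + Complex.normSq w3 : ℝ) : ℂ))

/-- Inverse stereographic projection ℂ → S² (from the south pole). -/
def stInv (z : ℂ) : E3 :=
  EuclideanSpace.single (0 : Fin 3) (2 * z.re / (1 + Complex.normSq z)) +
    EuclideanSpace.single (1 : Fin 3) (2 * z.im / (1 + Complex.normSq z)) +
    EuclideanSpace.single (2 : Fin 3) ((1 - Complex.normSq z) / (1 + Complex.normSq z))

/-- Equatorial embedding ω_eq^{(1)}(x) = (x₃, x₁ + ix₂, 0). -/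
def omegaEq1 (x : E3) : V5 := (x 2, (x 0 : ℂ) + (x 1 : ℂ) * Complex.I, 0)

/-- Equatorial embedding ω_eq^{(2)}(x) = (x₃, 0, x₁ + ix₂). -/
def omegaEq2 (x : E3) : V5 := (x 2, 0, (x 0 : ℂ) + (x 1 : ℂ) * Complex.I)

/-- The horizontal algebraic curve composed with the twistor fibration. -/
def liftCurve (μ1 μ2 z0 z1 : ℂ) : V5 :=
  tau4 (z0 ^ 3) (μ1 * z0 ^ 2 * z1) (μ2 * z0 * z1 ^ 2) (-(μ1 * μ2 / 3) * z1 ^ 3)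

/-- The explicit two-parameter family ω_{μ₁,μ₂} of equivariant harmonic spheres,
as a map defined on S² via the identification [z₀, z₁] ↦ σ₂⁻¹(z₁/z₀). -/
def omegaFam (μ1 μ2 : ℂ) (x : E3) : V5 :=
  if x = southPole then
    if μ1 = 0 ∧ μ2 = 0 then ((1 : ℝ), 0, 0)
    else if μ1 ≠ 0 ∧ μ2 ≠ 0 then liftCurve μ1 μ2 0 1
    else ((-1 : ℝ), 0, 0)
  else liftCurve μ1 μ2 ((1 + x 2 : ℝ) : ℂ) ((x 0 : ℂ) + (x 1 : ℂ) * Complex.I)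

/-- Wirtinger derivative ∂f/∂z̄ = ½(∂_{x₁} + i ∂_{x₂})f. -/
def wd (f : ℂ → ℂ) (z : ℂ) : ℂ :=
  (1 / 2 : ℂ) * (fderiv ℝ f z 1 + Complex.I * fderiv ℝ f z Complex.I)

/-- Surface (2-dimensional Hausdorff) measure on ℝ³. -/
def surf : Measure E3 := Measure.hausdorffMeasure 2

/-! The components of τ are ratios of Hermitian forms in w, so scaling by λ multiplies numerators
and denominator by |λ|². Under the twist wⱼ ↦ e^{ijα}wⱼ a monomial w̄ᵢwⱼ picks up e^{i(j-i)α}, and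
j - i is 1 throughout the second component and 2 throughout the third. -/

lemma normSq_sum_pos_of_ne_zero {w0 w1 w2 w3 : ℂ}
    (hw : ¬(w0 = 0 ∧ w1 = 0 ∧ w2 = 0 ∧ w3 = 0)) :
    0 < Complex.normSq w0 + Complex.normSq w1 + Complex.normSq w2 + Complex.normSq w3 := by
  have := Complex.normSq_nonneg w0; have := Complex.normSq_nonneg w1
  have := Complex.normSq_nonneg w2; have := Complex.normSq_nonneg w3
  by_contra! h
  exact hw ⟨Complex.normSq_eq_zero.1 (by linarith), Complex.normSq_eq_zero.1 (by linarith),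
    Complex.normSq_eq_zero.1 (by linarith), Complex.normSq_eq_zero.1 (by linarith)⟩

lemma sq_normSq_sum_eq (w0 w1 w2 w3 : ℂ) :
    (Complex.normSq w0 + Complex.normSq w1 + Complex.normSq w2 + Complex.normSq w3) ^ 2 =
      (Complex.normSq w0 + Complex.normSq w3 - Complex.normSq w1 - Complex.normSq w2) ^ 2 +
        4 * Complex.normSq (conj' w0 * w1 + conj' w2 * w3) +
        4 * Complex.normSq (conj' w0 * w2 - conj' w1 * w3) := by
  simp only [Complex.normSq_apply, conj', Complex.add_re, Complex.add_im, Complex.sub_re,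
    Complex.sub_im, Complex.mul_re, Complex.mul_im, Complex.conj_re, Complex.conj_im]
  ring

lemma nsq_tau4 {w0 w1 w2 w3 : ℂ} (hw : ¬(w0 = 0 ∧ w1 = 0 ∧ w2 = 0 ∧ w3 = 0)) :
    nsq (tau4 w0 w1 w2 w3) = 1 := by
  have hD := (normSq_sum_pos_of_ne_zero hw).ne'
  simp only [nsq, tau4, Complex.normSq_div, Complex.normSq_mul, Complex.normSq_ofReal,
    Complex.normSq_ofNat, div_pow, ← sq]
  rw [← add_div, ← add_div, div_eq_one_iff_eq (pow_ne_zero 2 hD)]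
  linear_combination (sq_normSq_sum_eq w0 w1 w2 w3).symm

lemma conj'_mul_mul_mul (lam a b : ℂ) :
    conj' (lam * a) * (lam * b) = (Complex.normSq lam : ℂ) * (conj' a * b) := by
  rw [conj', conj', map_mul, Complex.normSq_eq_conj_mul_self]
  ring

lemma tau4_mul {lam : ℂ} (hlam : lam ≠ 0) (w0 w1 w2 w3 : ℂ) :
    tau4 (lam * w0) (lam * w1) (lam * w2) (lam * w3) = tau4 w0 w1 w2 w3 := by
  have hl : Complex.normSq lam ≠ 0 := Complex.normSq_eq_zero.not.2 hlam
  simp only [tau4, Complex.normSq_mul, conj'_mul_mul_mul, ← mul_add, ← mul_sub,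
    Complex.ofReal_mul, mul_left_comm (2 : ℂ), mul_div_mul_left _ _ hl,
    mul_div_mul_left _ _ (Complex.ofReal_ne_zero.2 hl)]

lemma tau4_twist {u : ℂ} (hu : ‖u‖ = 1) (w0 w1 w2 w3 : ℂ) :
    tau4 w0 (u * w1) (u ^ 2 * w2) (u ^ 3 * w3) =
      ((tau4 w0 w1 w2 w3).1, u * (tau4 w0 w1 w2 w3).2.1, u ^ 2 * (tau4 w0 w1 w2 w3).2.2) := by
  have hu' : Complex.normSq u = 1 := by rw [Complex.normSq_eq_norm_sq, hu, one_pow]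
  have hcu : (starRingEnd ℂ) u * u = 1 := by
    rw [← Complex.normSq_eq_conj_mul_self, hu', Complex.ofReal_one]
  have hζ₁ : conj' w0 * (u * w1) + conj' (u ^ 2 * w2) * (u ^ 3 * w3) =
      u * (conj' w0 * w1 + conj' w2 * w3) := by
    simp only [conj', map_mul, map_pow]
    linear_combination ((starRingEnd ℂ) u * u + 1) * u * (starRingEnd ℂ) w2 * w3 * hcu
  have hζ₂ : conj' w0 * (u ^ 2 * w2) - conj' (u * w1) * (u ^ 3 * w3) =
      u ^ 2 * (conj' w0 * w2 - conj' w1 * w3) := by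
    simp only [conj', map_mul]
    linear_combination -(u ^ 2 * (starRingEnd ℂ) w1 * w3 * hcu)
  simp only [tau4, Complex.normSq_mul, map_pow, hu', one_pow, one_mul, hζ₁, hζ₂,
    mul_left_comm (2 : ℂ), mul_div_assoc]

lemma exp_nat_mul_I_mul (n : ℕ) (α : ℝ) :
    Complex.exp (n * Complex.I * α) = Complex.exp (Complex.I * α) ^ n := by
  rw [mul_assoc, Complex.exp_nat_mul]

/-- The twistor fibration τ : ℂP³ → S⁴ is well defined and S¹-equivariant: for every
nonzero w ∈ ℂ⁴, τ(w) has unit norm, τ(λw) = τ(w) for λ ≠ 0, and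
τ(w₀, e^{iα}w₁, e^{2iα}w₂, e^{3iα}w₃) = R_α · τ(w). -/
theorem statement3 (w0 w1 w2 w3 : ℂ) (hw : ¬(w0 = 0 ∧ w1 = 0 ∧ w2 = 0 ∧ w3 = 0)) :
    nsq (tau4 w0 w1 w2 w3) = 1 ∧
    (∀ lam : ℂ, lam ≠ 0 →
      tau4 (lam * w0) (lam * w1) (lam * w2) (lam * w3) = tau4 w0 w1 w2 w3) ∧
    (∀ α : ℝ,
      tau4 w0 (Complex.exp (Complex.I * (α : ℂ)) * w1)
        (Complex.exp (2 * Complex.I * (α : ℂ)) * w2)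
        (Complex.exp (3 * Complex.I * (α : ℂ)) * w3) =
      circAct α (tau4 w0 w1 w2 w3)) := by
  refine ⟨nsq_tau4 hw, fun lam hlam => tau4_mul hlam w0 w1 w2 w3, fun α => ?_⟩
  have hexp2 := exp_nat_mul_I_mul 2 α
  have hexp3 := exp_nat_mul_I_mul 3 α
  push_cast at hexp2 hexp3
  rw [hexp2, hexp3, tau4_twist (Complex.norm_exp_I_mul_ofReal α), circAct, hexp2]
end
end

section
/- Let ω: S² → S⁴ be a nonconstant, smooth, S¹-equivariant harmonic sphere which is not linearly full. Then the real linear span of ω(S²) in ℝ⊕ℂ⊕ℂ is either ℝ⊕ℂ⊕{0} or ℝ⊕{0}⊕ℂ. -/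
noncomputable section

open MeasureTheory
open scoped Classical

/-- The subspace ℝ ⊕ ℂ ⊕ {0} of ℝ ⊕ ℂ ⊕ ℂ. -/
def L01 : Submodule ℝ V5 :=
  (⊤ : Submodule ℝ ℝ).prod ((⊤ : Submodule ℝ ℂ).prod (⊥ : Submodule ℝ ℂ))

/-- The subspace ℝ ⊕ {0} ⊕ ℂ of ℝ ⊕ ℂ ⊕ ℂ. -/
def L02 : Submodule ℝ V5 :=
  (⊤ : Submodule ℝ ℝ).prod ((⊥ : Submodule ℝ ℂ).prod (⊤ : Submodule ℝ ℂ))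

/-!
Rotation by `α` multiplies `ζ₁` by `e^{iα}` and `ζ₂` by `e^{2iα}`, so an S¹-invariant subspace of
`ℝ ⊕ ℂ ⊕ ℂ` containing `(1, 0, 0)` splits as `ℝ ⊕ W₁ ⊕ W₂` with rotation-invariant real subspaces
`Wⱼ ⊆ ℂ`, each of which is `0` or `ℂ`. The span of an equivariant sphere contains `(1, 0, 0)`,
since the north pole is fixed by all rotations and so maps to `(±1, 0, 0)`. Of the four candidate
spans, `ℝ ⊕ ℂ ⊕ ℂ` is excluded by non-fullness, and `ℝ ⊕ 0 ⊕ 0` would make `ω` a continuous map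
from the connected sphere to `{(±1, 0, 0)}`, hence constant.
-/

open Complex
open scoped Real

lemma norm_rot3 (α : ℝ) (x : E3) : ‖rot3 α x‖ = ‖x‖ := by
  simp only [EuclideanSpace.norm_eq, Fin.sum_univ_three, rot3, PiLp.add_apply,
    PiLp.single_apply, Fin.reduceEq, ↓reduceIte, add_zero, zero_add, Real.norm_eq_abs, sq_abs]
  congr 1
  linear_combination (x 0 ^ 2 + x 1 ^ 2) * Real.cos_sq_add_sin_sq α

lemma rot3_mem_sphere2 (α : ℝ) {x : E3} (hx : x ∈ sphere2) : rot3 α x ∈ sphere2 := by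
  simpa [sphere2, norm_rot3] using hx

lemma rot3_northPole (α : ℝ) : rot3 α northPole = northPole := by
  ext i
  fin_cases i <;> simp [rot3, northPole]

lemma northPole_mem_sphere2 : northPole ∈ sphere2 := by
  simp [sphere2, northPole]

lemma isConnected_sphere2 : IsConnected sphere2 := by
  refine isConnected_sphere ?_ 0 zero_le_one
  rw [← Module.finrank_eq_rank, finrank_euclideanSpace_fin]
  norm_num

def circActLinear (α : ℝ) : V5 →ₗ[ℝ] V5 where
  toFun := circAct α
  map_add' p q := by simp [circAct, mul_add]
  map_smul' c p := by simp [circAct, Complex.real_smul, mul_left_comm]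

lemma circAct_pi (p : V5) : circAct π p = (p.1, -p.2.1, p.2.2) := by
  have h₁ : exp (I * π) = -1 := by rw [mul_comm, exp_pi_mul_I]
  have h₂ : exp (2 * I * π) = 1 := by rw [mul_right_comm, exp_two_pi_mul_I]
  simp [circAct, h₁, h₂]

lemma circAct_pi_div_two (p : V5) : circAct (π / 2) p = (p.1, I * p.2.1, -p.2.2) := by
  have h₁ : exp (I * ↑(π / 2)) = I := by push_cast; rw [mul_comm, exp_pi_div_two_mul_I]
  have h₂ : exp (2 * I * ↑(π / 2)) = -1 := by
    rw [show 2 * I * ↑(π / 2) = π * I by push_cast; ring, exp_pi_mul_I]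
  simp only [circAct, h₁, h₂, neg_one_mul]

def inclζ₁ : ℂ →ₗ[ℝ] V5 := LinearMap.inr ℝ ℝ (ℂ × ℂ) ∘ₗ LinearMap.inl ℝ ℂ ℂ

def inclζ₂ : ℂ →ₗ[ℝ] V5 := LinearMap.inr ℝ ℝ (ℂ × ℂ) ∘ₗ LinearMap.inr ℝ ℂ ℂ

@[simp] lemma inclζ₁_apply (z : ℂ) : inclζ₁ z = (0, z, 0) := rfl

@[simp] lemma inclζ₂_apply (w : ℂ) : inclζ₂ w = (0, 0, w) := rfl

lemma circAct_inclζ₁ (α : ℝ) (z : ℂ) : circAct α (inclζ₁ z) = inclζ₁ (exp (I * α) * z) := by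
  simp [circAct]

lemma circAct_half_inclζ₂ (α : ℝ) (w : ℂ) :
    circAct (α / 2) (inclζ₂ w) = inclζ₂ (exp (I * α) * w) := by
  have h : 2 * I * ↑(α / 2) = I * α := by push_cast; ring
  simp only [circAct, inclζ₂_apply, h, mul_zero]

lemma Submodule.eq_bot_or_eq_top_of_exp_mul_mem (W : Submodule ℝ ℂ)
    (hW : ∀ (α : ℝ), ∀ z ∈ W, exp (I * α) * z ∈ W) : W = ⊥ ∨ W = ⊤ := by
  refine or_iff_not_imp_left.mpr fun hne => eq_top_iff.mpr fun u _ => ?_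
  obtain ⟨z, hzW, hz⟩ := W.exists_mem_ne_zero_of_ne_bot hne
  -- `u` is a real multiple of a rotate of `z`: the polar form of `u / z`
  have hu : u = ‖u / z‖ • (exp (I * (u / z).arg) * z) := by
    rw [Complex.real_smul, ← mul_assoc, mul_comm I, norm_mul_exp_arg_mul_I, div_mul_cancel₀ u hz]
  rw [hu]
  exact W.smul_mem _ (hW _ z hzW)

def IsCircActInvariant (V : Submodule ℝ V5) : Prop := ∀ (α : ℝ), ∀ v ∈ V, circAct α v ∈ V

namespace IsCircActInvariant

variable {V : Submodule ℝ V5}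

lemma zero_ζ₁_mem (hV : IsCircActInvariant V) {v : V5} (hv : v ∈ V) :
    ((v.1, 0, v.2.2) : V5) ∈ V := by
  convert V.smul_mem (1 / 2 : ℝ) (V.add_mem hv (hV π v hv)) using 1
  rw [circAct_pi]
  ext <;> simp <;> ring

lemma axis_mem (hV : IsCircActInvariant V) {v : V5} (hv : v ∈ V) :
    ((v.1, 0, 0) : V5) ∈ V := by
  have h := hV.zero_ζ₁_mem hv
  convert V.smul_mem (1 / 2 : ℝ) (V.add_mem h (hV (π / 2) _ h)) using 1
  rw [circAct_pi_div_two]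
  ext <;> simp
  ring

lemma inclζ₁_mem (hV : IsCircActInvariant V) {v : V5} (hv : v ∈ V) : inclζ₁ v.2.1 ∈ V := by
  convert V.sub_mem hv (hV.zero_ζ₁_mem hv) using 1
  ext <;> simp

lemma inclζ₂_mem (hV : IsCircActInvariant V) {v : V5} (hv : v ∈ V) : inclζ₂ v.2.2 ∈ V := by
  convert V.sub_mem (hV.zero_ζ₁_mem hv) (hV.axis_mem hv) using 1
  ext <;> simp

lemma eq_prod_comap (hV : IsCircActInvariant V) (h₁ : ((1, 0, 0) : V5) ∈ V) :
    V = (⊤ : Submodule ℝ ℝ).prod ((V.comap inclζ₁).prod (V.comap inclζ₂)) := by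
  ext v
  simp only [Submodule.mem_prod, Submodule.mem_top, Submodule.mem_comap, true_and]
  refine ⟨fun hv => ⟨hV.inclζ₁_mem hv, hV.inclζ₂_mem hv⟩, fun ⟨hz, hw⟩ => ?_⟩
  convert V.add_mem (V.add_mem (V.smul_mem v.1 h₁) hz) hw using 1
  ext <;> simp

lemma comap_inclζ₁_eq_bot_or_eq_top (hV : IsCircActInvariant V) :
    V.comap inclζ₁ = ⊥ ∨ V.comap inclζ₁ = ⊤ :=
  Submodule.eq_bot_or_eq_top_of_exp_mul_mem _ fun α z hz => by
    simpa only [Submodule.mem_comap, circAct_inclζ₁] using hV α _ hz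

lemma comap_inclζ₂_eq_bot_or_eq_top (hV : IsCircActInvariant V) :
    V.comap inclζ₂ = ⊥ ∨ V.comap inclζ₂ = ⊤ :=
  Submodule.eq_bot_or_eq_top_of_exp_mul_mem _ fun α w hw => by
    simpa only [Submodule.mem_comap, circAct_half_inclζ₂] using hV (α / 2) _ hw

lemma eq_axis_or_L01_or_L02_or_top (hV : IsCircActInvariant V) (h₁ : ((1, 0, 0) : V5) ∈ V) :
    V = (⊤ : Submodule ℝ ℝ).prod ⊥ ∨ V = L01 ∨ V = L02 ∨ V = ⊤ := by
  rw [hV.eq_prod_comap h₁]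
  rcases hV.comap_inclζ₁_eq_bot_or_eq_top with h | h <;>
    rcases hV.comap_inclζ₂_eq_bot_or_eq_top with h' | h' <;>
    simp [h, h', L01, L02, Submodule.prod_bot, Submodule.prod_top]

end IsCircActInvariant

lemma EquivariantS.isCircActInvariant_span {ω : E3 → V5} (heq : EquivariantS ω) :
    IsCircActInvariant (Submodule.span ℝ (ω '' sphere2)) := by
  intro α v hv
  have hmap : (Submodule.span ℝ (ω '' sphere2)).map (circActLinear α) ≤
      Submodule.span ℝ (ω '' sphere2) := by
    rw [Submodule.map_span]
    refine Submodule.span_mono ?_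
    rintro _ ⟨_, ⟨x, hx, rfl⟩, rfl⟩
    exact ⟨rot3 α x, rot3_mem_sphere2 α hx, heq α x hx⟩
  exact hmap ⟨v, hv, rfl⟩

lemma EquivariantS.snd_apply_northPole {ω : E3 → V5} (heq : EquivariantS ω) :
    (ω northPole).2 = 0 := by
  have hπ := heq π northPole northPole_mem_sphere2
  have hπ2 := heq (π / 2) northPole northPole_mem_sphere2
  rw [rot3_northPole, circAct_pi] at hπ
  rw [rot3_northPole, circAct_pi_div_two] at hπ2
  simp only [Prod.ext_iff] at hπ hπ2
  simp only [Prod.ext_iff, Prod.fst_zero, Prod.snd_zero]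
  constructor
  · linear_combination hπ.2.1 / 2
  · linear_combination hπ2.2.2 / 2

lemma axis_mem_span {ω : E3 → V5} (hunit : ∀ x ∈ sphere2, nsq (ω x) = 1)
    (heq : EquivariantS ω) : ((1, 0, 0) : V5) ∈ Submodule.span ℝ (ω '' sphere2) := by
  have hsnd := heq.snd_apply_northPole
  have hfst : (ω northPole).1 = 1 ∨ (ω northPole).1 = -1 := by
    simpa [nsq, hsnd] using hunit northPole northPole_mem_sphere2
  have hmem := Submodule.subset_span (R := ℝ) (Set.mem_image_of_mem ω northPole_mem_sphere2)
  convert Submodule.smul_mem _ (ω northPole).1 hmem using 1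
  rcases hfst with h | h <;> simp [Prod.ext_iff, h, hsnd]

lemma IsHarmonicSphere.continuousOn {ω : E3 → V5} (hH : IsHarmonicSphere ω) :
    ContinuousOn ω sphere2 := by
  have hsub : sphere2 ⊆ {(0 : E3)}ᶜ := fun x hx h => by simp_all [sphere2]
  refine (hH.2.1.continuousOn.mono hsub).congr fun x hx => ?_
  have hx1 : ‖x‖ = 1 := by simpa [sphere2] using hx
  simp [homExt, hx1]

lemma IsHarmonicSphere.apply_eq_apply_of_span_eq_axis {ω : E3 → V5} (hH : IsHarmonicSphere ω)
    (h : Submodule.span ℝ (ω '' sphere2) = (⊤ : Submodule ℝ ℝ).prod ⊥)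
    {x y : E3} (hx : x ∈ sphere2) (hy : y ∈ sphere2) : ω x = ω y := by
  have hpoles : Set.MapsTo ω sphere2 {((1 : ℝ), 0, 0), ((-1 : ℝ), 0, 0)} := by
    intro z hz
    have hsnd : (ω z).2 = 0 := by
      have hmem := h ▸ Submodule.subset_span (R := ℝ) (Set.mem_image_of_mem ω hz)
      simpa using hmem
    have hfst : (ω z).1 = 1 ∨ (ω z).1 = -1 := by simpa [nsq, hsnd] using hH.1 z hz
    rcases hfst with h₁ | h₁ <;> simp [Prod.ext_iff, h₁, hsnd]
  exact isConnected_sphere2.isPreconnected.constant_of_mapsTo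
    (Set.toFinite _).isDiscrete hH.continuousOn hpoles hx hy

/-- If ω : S² → S⁴ is a nonconstant smooth S¹-equivariant harmonic sphere which is not
linearly full, then the real linear span of its image is either ℝ ⊕ ℂ ⊕ {0} or
ℝ ⊕ {0} ⊕ ℂ. -/
theorem statement4 (ω : E3 → V5)
    (hH : IsHarmonicSphere ω) (heq : EquivariantS ω)
    (hnc : ∃ x ∈ sphere2, ∃ y ∈ sphere2, ω x ≠ ω y)
    (hnf : Submodule.span ℝ (ω '' sphere2) ≠ ⊤) :
    Submodule.span ℝ (ω '' sphere2) = L01 ∨ Submodule.span ℝ (ω '' sphere2) = L02 := by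
  rcases heq.isCircActInvariant_span.eq_axis_or_L01_or_L02_or_top (axis_mem_span hH.1 heq)
    with h | h | h | h
  · obtain ⟨x, hx, y, hy, hne⟩ := hnc
    exact absurd (hH.apply_eq_apply_of_span_eq_axis h hx hy) hne
  · exact Or.inl h
  · exact Or.inr h
  · exact absurd h hnf
end
end

section
/- For μ₀,μ₁,μ₂,μ₃ ∈ ℂ, let Φ: ℂ² → ℂ⁴ be the polynomial map Φ(z₀,z₁) = (μ₀z₀³, μ₁z₀²z₁, μ₂z₀z₁², μ₃z₁³). Then the horizontality condition Φ*Θ = 0 — i.e. Φ₀(p)·DΦ₃(p)[v] − Φ₃(p)·DΦ₀(p)[v] + Φ₁(p)·DΦ₂(p)[v] − Φ₂(p)·DΦ₁(p)[v] = 0 for every p ∈ ℂ² and every direction v ∈ ℂ², where DΦ_j(p)[v] is the (complex) derivative of Φ_j at p in direction v — holds if and only if μ₀μ₃ = −μ₁μ₂/3. -/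
noncomputable section

theorem fderiv_monomial_apply {𝕜 : Type*} [NontriviallyNormedField 𝕜] (c : 𝕜) (m n : ℕ)
    (p v : 𝕜 × 𝕜) :
    fderiv 𝕜 (fun q : 𝕜 × 𝕜 => c * q.1 ^ m * q.2 ^ n) p v =
      c * (m * p.1 ^ (m - 1) * v.1 * p.2 ^ n + n * p.1 ^ m * p.2 ^ (n - 1) * v.2) := by
  have h : HasFDerivAt (fun q : 𝕜 × 𝕜 => c * q.1 ^ m * q.2 ^ n) _ p :=
    (((hasFDerivAt_fst (𝕜 := 𝕜)).pow m).const_mul c).fun_mul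
      ((hasFDerivAt_snd (𝕜 := 𝕜)).pow n)
  rw [h.fderiv]
  simp only [add_apply, smul_apply, ContinuousLinearMap.coe_fst', ContinuousLinearMap.coe_snd',
    smul_eq_mul, nsmul_eq_mul]
  ring

theorem horizontality_form_eq (μ0 μ1 μ2 μ3 : ℂ) (p v : ℂ × ℂ) :
    (μ0 * p.1 ^ 3) * fderiv ℂ (fun q : ℂ × ℂ => μ3 * q.2 ^ 3) p v -
        (μ3 * p.2 ^ 3) * fderiv ℂ (fun q : ℂ × ℂ => μ0 * q.1 ^ 3) p v +
        (μ1 * p.1 ^ 2 * p.2) * fderiv ℂ (fun q : ℂ × ℂ => μ2 * q.1 * q.2 ^ 2) p v -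
        (μ2 * p.1 * p.2 ^ 2) * fderiv ℂ (fun q : ℂ × ℂ => μ1 * q.1 ^ 2 * q.2) p v =
      (3 * μ0 * μ3 + μ1 * μ2) * (p.1 ^ 2 * p.2 ^ 2 * (p.1 * v.2 - p.2 * v.1)) := by
  have h0 := fderiv_monomial_apply μ0 3 0 p v
  have h1 := fderiv_monomial_apply μ1 2 1 p v
  have h2 := fderiv_monomial_apply μ2 1 2 p v
  have h3 := fderiv_monomial_apply μ3 0 3 p v
  simp only [pow_zero, pow_one, mul_one] at h0 h1 h2 h3
  rw [h0, h1, h2, h3]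
  push_cast
  ring

/-- For Φ(z₀,z₁) = (μ₀z₀³, μ₁z₀²z₁, μ₂z₀z₁², μ₃z₁³), the horizontality condition
Φ*Θ = 0 (with Θ = w₀dw₃ − w₃dw₀ + w₁dw₂ − w₂dw₁) holds iff μ₀μ₃ = −μ₁μ₂/3. -/
theorem statement7 (μ0 μ1 μ2 μ3 : ℂ) :
    (∀ p v : ℂ × ℂ,
      (μ0 * p.1 ^ 3) * fderiv ℂ (fun q : ℂ × ℂ => μ3 * q.2 ^ 3) p v -
        (μ3 * p.2 ^ 3) * fderiv ℂ (fun q : ℂ × ℂ => μ0 * q.1 ^ 3) p v +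
        (μ1 * p.1 ^ 2 * p.2) * fderiv ℂ (fun q : ℂ × ℂ => μ2 * q.1 * q.2 ^ 2) p v -
        (μ2 * p.1 * p.2 ^ 2) * fderiv ℂ (fun q : ℂ × ℂ => μ1 * q.1 ^ 2 * q.2) p v = 0) ↔
    μ0 * μ3 = -(μ1 * μ2) / 3 := by
  simp only [horizontality_form_eq]
  constructor
  · intro h
    have h_at_one := h (1, 1) (0, 1)
    norm_num at h_at_one
    linear_combination h_at_one / 3
  · intro h p v
    linear_combination (3 * (p.1 ^ 2 * p.2 ^ 2 * (p.1 * v.2 - p.2 * v.1))) * h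
end
end

section
/- Let U ⊂ ℂ be open, let ω: S² → S⁴ be a smooth map with ω(σ₂⁻¹(z)) ≠ (−1,0,0) for all z ∈ U, and define ξ, η: U → ℂ by (ξ(z), η(z)) = σ₄(ω(σ₂⁻¹(z))). Then at every z ∈ U at which (∂_z̄ ξ̄(z), ∂_z̄ η(z)) ≠ (0,0), the quadruple w(z) = ( ξ̄_z̄ , ξ̄_z̄ ξ + η_z̄ η̄ , ξ̄_z̄ η − η_z̄ ξ̄ , −η_z̄ ) evaluated at z is nonzero and satisfies τ(w(z)) = ω(σ₂⁻¹(z)); i.e. the positive twistor lift is indeed a lift of ω through the twistor fibration τ. -/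
noncomputable section

open MeasureTheory
open scoped Classical

/-- ξ = first component of σ₄ ∘ ω ∘ σ₂⁻¹. -/
def xiOf (ω : E3 → V5) (z : ℂ) : ℂ :=
  (ω (stInv z)).2.1 / ((1 + (ω (stInv z)).1 : ℝ) : ℂ)

/-- η = second component of σ₄ ∘ ω ∘ σ₂⁻¹. -/
def etaOf (ω : E3 → V5) (z : ℂ) : ℂ :=
  (ω (stInv z)).2.2 / ((1 + (ω (stInv z)).1 : ℝ) : ℂ)

lemma stInv_mem_sphere2 (z : ℂ) : stInv z ∈ sphere2 := by
  have hq : 0 < 1 + Complex.normSq z := by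
    have := Complex.normSq_nonneg z; linarith
  have hq' : (1 + Complex.normSq z) ≠ 0 := ne_of_gt hq
  simp only [sphere2, Metric.mem_sphere, dist_zero_right]
  rw [EuclideanSpace.norm_eq]
  have h0 : stInv z 0 = 2 * z.re / (1 + Complex.normSq z) := by
    simp [stInv, EuclideanSpace.single_apply]
  have h1 : stInv z 1 = 2 * z.im / (1 + Complex.normSq z) := by
    simp [stInv, EuclideanSpace.single_apply]
  have h2 : stInv z 2 = (1 - Complex.normSq z) / (1 + Complex.normSq z) := by
    simp [stInv, EuclideanSpace.single_apply]
  have h : ∑ i : Fin 3, ‖stInv z i‖ ^ 2 = 1 := by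
    rw [Fin.sum_univ_three, h0, h1, h2]
    simp only [Real.norm_eq_abs, sq_abs]
    rw [Complex.normSq_apply] at *
    field_simp
    ring
  rw [h, Real.sqrt_one]

lemma normSq_lift_sum (a b ξ η : ℂ) :
    Complex.normSq (a*ξ + b*conj' η) + Complex.normSq (a*η - b*conj' ξ)
      = (Complex.normSq a + Complex.normSq b) * (Complex.normSq ξ + Complex.normSq η) := by
  simp only [conj', Complex.normSq_apply, Complex.add_re, Complex.add_im, Complex.sub_re,
    Complex.sub_im, Complex.mul_re, Complex.mul_im, Complex.conj_re, Complex.conj_im]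
  ring

lemma lift_num2 (a b ξ η : ℂ) :
    conj' a * (a*ξ + b*conj' η) + conj' (a*η - b*conj' ξ) * (-b)
      = ((Complex.normSq a + Complex.normSq b : ℝ) : ℂ) * ξ := by
  simp only [conj', map_sub, map_mul, map_add, Complex.conj_conj]
  rw [Complex.ofReal_add, ← Complex.mul_conj, ← Complex.mul_conj]
  ring

lemma lift_num3 (a b ξ η : ℂ) :
    conj' a * (a*η - b*conj' ξ) - conj' (a*ξ + b*conj' η) * (-b)
      = ((Complex.normSq a + Complex.normSq b : ℝ) : ℂ) * η := by
  simp only [conj', map_sub, map_mul, map_add, Complex.conj_conj]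
  rw [Complex.ofReal_add, ← Complex.mul_conj, ← Complex.mul_conj]
  ring


/-- The positive twistor lift w = (ξ̄_z̄, ξ̄_z̄ξ + η_z̄η̄, ξ̄_z̄η − η_z̄ξ̄, −η_z̄) is nonzero
and is a lift of ω through the twistor fibration: τ(w(z)) = ω(σ₂⁻¹(z)). -/
theorem statement9 (U : Set ℂ) (hU : IsOpen U) (ω : E3 → V5)
    (hsph : ∀ x ∈ sphere2, nsq (ω x) = 1)
    (hsm : ContDiffOn ℝ (⊤ : ℕ∞) (homExt ω) {(0 : E3)}ᶜ)
    (havoid : ∀ z ∈ U, ω (stInv z) ≠ ((-1 : ℝ), 0, 0)) :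
    ∀ z ∈ U,
      (wd (fun t => conj' (xiOf ω t)) z, wd (etaOf ω) z) ≠ ((0 : ℂ), (0 : ℂ)) →
      ¬(wd (fun t => conj' (xiOf ω t)) z = 0 ∧
          wd (fun t => conj' (xiOf ω t)) z * xiOf ω z + wd (etaOf ω) z * conj' (etaOf ω z) = 0 ∧
          wd (fun t => conj' (xiOf ω t)) z * etaOf ω z - wd (etaOf ω) z * conj' (xiOf ω z) = 0 ∧
          -wd (etaOf ω) z = 0) ∧
      tau4 (wd (fun t => conj' (xiOf ω t)) z)
          (wd (fun t => conj' (xiOf ω t)) z * xiOf ω z + wd (etaOf ω) z * conj' (etaOf ω z))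
          (wd (fun t => conj' (xiOf ω t)) z * etaOf ω z - wd (etaOf ω) z * conj' (xiOf ω z))
          (-wd (etaOf ω) z) =
        ω (stInv z) := by
  intro z hz hab
  set a := wd (fun t => conj' (xiOf ω t)) z with ha
  set b := wd (etaOf ω) z with hb
  have hmem : stInv z ∈ sphere2 := stInv_mem_sphere2 z
  set p := ω (stInv z) with hp
  have hns : p.1 ^ 2 + Complex.normSq p.2.1 + Complex.normSq p.2.2 = 1 := hsph _ hmem
  have hne : p ≠ ((-1:ℝ), 0, 0) := havoid z hz
  have hn1 := Complex.normSq_nonneg p.2.1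
  have hn2 := Complex.normSq_nonneg p.2.2
  have ht : 0 < 1 + p.1 := by
    by_contra h
    push_neg at h
    have h1 : p.1 = -1 := by nlinarith
    have h2 : Complex.normSq p.2.1 = 0 := by nlinarith
    have h3 : Complex.normSq p.2.2 = 0 := by nlinarith
    refine hne ?_
    rw [Prod.ext_iff, Prod.ext_iff]
    exact ⟨h1, Complex.normSq_eq_zero.mp h2, Complex.normSq_eq_zero.mp h3⟩
  have ht' : (1 + p.1 : ℝ) ≠ 0 := ne_of_gt ht
  have hc : ((1 + p.1 : ℝ) : ℂ) ≠ 0 := Complex.ofReal_ne_zero.mpr ht'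
  have hnz : ¬(a = 0 ∧ b = 0) := by
    rintro ⟨h1, h2⟩; exact hab (by rw [h1, h2])
  have hS : 0 < Complex.normSq a + Complex.normSq b := by
    rcases eq_or_ne a 0 with h | h
    · have hb0 : b ≠ 0 := fun h2 => hnz ⟨h, h2⟩
      have := Complex.normSq_pos.mpr hb0
      have := Complex.normSq_nonneg a
      linarith
    · have := Complex.normSq_pos.mpr h
      have := Complex.normSq_nonneg b
      linarith
  have hξ : xiOf ω z = p.2.1 / ((1 + p.1 : ℝ) : ℂ) := rfl
  have hη : etaOf ω z = p.2.2 / ((1 + p.1 : ℝ) : ℂ) := rfl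
  have hnsξ : Complex.normSq (xiOf ω z) + Complex.normSq (etaOf ω z)
      = (1 - p.1) / (1 + p.1) := by
    rw [hξ, hη, Complex.normSq_div, Complex.normSq_div, Complex.normSq_ofReal]
    field_simp
    nlinarith [hns]
  constructor
  · rintro ⟨h1, -, -, h4⟩
    exact hnz ⟨h1, neg_eq_zero.mp h4⟩
  · set w1 := a * xiOf ω z + b * conj' (etaOf ω z) with hw1
    set w2 := a * etaOf ω z - b * conj' (xiOf ω z) with hw2
    have hkey1 : Complex.normSq w1 + Complex.normSq w2
        = (Complex.normSq a + Complex.normSq b)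
          * (Complex.normSq (xiOf ω z) + Complex.normSq (etaOf ω z)) := by
      rw [hw1, hw2]; exact normSq_lift_sum a b (xiOf ω z) (etaOf ω z)
    have hkey2 : conj' a * w1 + conj' w2 * (-b)
        = ((Complex.normSq a + Complex.normSq b : ℝ) : ℂ) * xiOf ω z := by
      rw [hw1, hw2]; exact lift_num2 a b (xiOf ω z) (etaOf ω z)
    have hkey3 : conj' a * w2 - conj' w1 * (-b)
        = ((Complex.normSq a + Complex.normSq b : ℝ) : ℂ) * etaOf ω z := by
      rw [hw1, hw2]; exact lift_num3 a b (xiOf ω z) (etaOf ω z)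
    have e1 : (Complex.normSq w1 + Complex.normSq w2) * (1 + p.1)
        = (Complex.normSq a + Complex.normSq b) * (1 - p.1) := by
      rw [hkey1, hnsξ]
      field_simp
    have hD : 0 < Complex.normSq a + Complex.normSq w1 + Complex.normSq w2
        + Complex.normSq b := by
      have := Complex.normSq_nonneg w1
      have := Complex.normSq_nonneg w2
      linarith
    have hD' : Complex.normSq a + Complex.normSq w1 + Complex.normSq w2
        + Complex.normSq b ≠ 0 := ne_of_gt hD
    have hD2 : (Complex.normSq a + Complex.normSq w1 + Complex.normSq w2
        + Complex.normSq b) * (1 + p.1)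
        = 2 * (Complex.normSq a + Complex.normSq b) := by
      linear_combination e1
    have hD2c : ((Complex.normSq a : ℝ) + Complex.normSq w1 + Complex.normSq w2
        + Complex.normSq b : ℂ) * (1 + (p.1 : ℂ))
        = 2 * ((Complex.normSq a : ℝ) + (Complex.normSq b : ℝ) : ℂ) := by
      exact_mod_cast congrArg (fun r : ℝ => (r : ℂ)) hD2
    have e1c : (((Complex.normSq w1 : ℝ) : ℂ) + ((Complex.normSq w2 : ℝ) : ℂ)) * (1 + (p.1 : ℂ))
        = (((Complex.normSq a : ℝ) : ℂ) + ((Complex.normSq b : ℝ) : ℂ)) * (1 - (p.1 : ℂ)) := by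
      exact_mod_cast congrArg (fun r : ℝ => (r : ℂ)) e1
    have hc' : (1 : ℂ) + (p.1 : ℂ) ≠ 0 := by
      rw [show (1 : ℂ) + (p.1 : ℂ) = ((1 + p.1 : ℝ) : ℂ) by push_cast; ring]
      exact hc
    have hDc : ((Complex.normSq a + Complex.normSq w1 + Complex.normSq w2
        + Complex.normSq b : ℝ) : ℂ) ≠ 0 := Complex.ofReal_ne_zero.mpr hD'
    rw [tau4, Prod.ext_iff, Prod.ext_iff]
    simp only [Complex.normSq_neg]
    refine ⟨?_, ?_, ?_⟩
    · rw [div_eq_iff hD']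
      linear_combination -e1
    · rw [hkey2, hξ, div_eq_iff hDc]
      push_cast
      field_simp
      linear_combination p.2.1 * hD2c - 2 * p.2.1 * e1c
    · rw [hkey3, hη, div_eq_iff hDc]
      push_cast
      field_simp
      linear_combination p.2.2 * hD2c - 2 * p.2.2 * e1c
end
end

section
/- Let ξ, η ∈ C^∞(ℂ; ℂ) satisfy on all of ℂ the conformality identity ξ_z̄ ξ̄_z̄ + η_z̄ η̄_z̄ = 0 and the isotropy identity ξ_z̄z̄ ξ̄_z̄z̄ + η_z̄z̄ η̄_z̄z̄ = 0. Then the identity ( ξ̄_z̄z̄ η̄_z̄ − η̄_z̄z̄ ξ̄_z̄ ) · ( ξ_z̄z̄ η̄_z̄ − η̄_z̄z̄ ξ_z̄ ) = 0 holds on all of ℂ. If moreover ξ and η are real-analytic, then at least one of the two factors vanishes identically on ℂ. -/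
noncomputable section

open MeasureTheory
open scoped Classical

/-!
Differentiating the conformality identity in `z̄` gives a third relation among the first and
second `z̄`-derivatives, and the product identity is an explicit polynomial combination of the
three relations. For real-analytic data both factors are real-analytic on the connected plane,
so by the identity theorem one of them vanishes identically.
-/

open Set Topology

section Wirtinger

variable {f g : ℂ → ℂ} {z : ℂ}

theorem ContDiff.wd {m n : WithTop ℕ∞} (hf : ContDiff ℝ n f) (hmn : m + 1 ≤ n) :
    ContDiff ℝ m (wd f) := by
  have hdf := hf.fderiv_right hmn
  exact contDiff_const.mul
    ((ContinuousLinearMap.apply ℝ ℂ (1 : ℂ)).contDiff.comp hdf |>.add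
      (contDiff_const.mul ((ContinuousLinearMap.apply ℝ ℂ Complex.I).contDiff.comp hdf)))

theorem AnalyticAt.wd (hf : AnalyticAt ℝ f z) : AnalyticAt ℝ (wd f) z := by
  have hdf := hf.fderiv
  exact analyticAt_const.mul
    (((ContinuousLinearMap.apply ℝ ℂ (1 : ℂ)).analyticAt _).comp hdf |>.add
      (analyticAt_const.mul
        (((ContinuousLinearMap.apply ℝ ℂ Complex.I).analyticAt _).comp hdf)))

theorem ContDiff.conj' {n : WithTop ℕ∞} (hf : ContDiff ℝ n f) :
    ContDiff ℝ n (fun t => conj' (f t)) :=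
  Complex.conjCLE.contDiff.comp hf

theorem AnalyticAt.conj' (hf : AnalyticAt ℝ f z) : AnalyticAt ℝ (fun t => conj' (f t)) z :=
  (Complex.conjCLE.toContinuousLinearMap.analyticAt _).comp hf

theorem wd_const (c : ℂ) (z : ℂ) : wd (fun _ => c) z = 0 := by
  simp [wd]

theorem wd_add (hf : DifferentiableAt ℝ f z) (hg : DifferentiableAt ℝ g z) :
    wd (fun t => f t + g t) z = wd f z + wd g z := by
  simp only [wd, fderiv_fun_add hf hg, add_apply]
  ring

theorem wd_mul (hf : DifferentiableAt ℝ f z) (hg : DifferentiableAt ℝ g z) :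
    wd (fun t => f t * g t) z = wd f z * g z + f z * wd g z := by
  simp only [wd, fderiv_fun_mul hf hg, add_apply, smul_apply, smul_eq_mul]
  ring

theorem wd_mul_add_mul_of_eq_zero {a A b B : ℂ → ℂ} (ha : Differentiable ℝ a)
    (hA : Differentiable ℝ A) (hb : Differentiable ℝ b) (hB : Differentiable ℝ B)
    (h : ∀ z, a z * A z + b z * B z = 0) (z : ℂ) :
    wd a z * A z + a z * wd A z + (wd b z * B z + b z * wd B z) = 0 := by
  have hzero : (fun t => a t * A t + b t * B t) = fun _ => 0 := funext h
  rw [← wd_mul (ha z) (hA z), ← wd_mul (hb z) (hB z),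
    ← wd_add ((ha z).fun_mul (hA z)) ((hb z).fun_mul (hB z)), hzero, wd_const]

end Wirtinger

theorem cross_mul_cross_eq_zero_of_isotropic {R : Type*} [CommRing R] {a A b B a' A' b' B' : R}
    (hconf : a * A + b * B = 0) (hderiv : a' * A + a * A' + (b' * B + b * B') = 0)
    (hiso : a' * A' + b' * B' = 0) :
    (A' * B - B' * A) * (a' * B - B' * a) = 0 := by
  linear_combination B ^ 2 * hiso - B * B' * hderiv + B' ^ 2 * hconf

theorem AnalyticOnNhd.eq_zero_or_eq_zero_of_mul_eq_zero_univ {𝕜 E A : Type*}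
    [NontriviallyNormedField 𝕜] [NormedAddCommGroup E] [NormedSpace 𝕜 E] [PreconnectedSpace E]
    [NormedRing A] [NormedSpace 𝕜 A] [NoZeroDivisors A] {f g : E → A}
    (hf : AnalyticOnNhd 𝕜 f univ) (hg : AnalyticOnNhd 𝕜 g univ) (hfg : ∀ x, f x * g x = 0) :
    (∀ x, f x = 0) ∨ (∀ x, g x = 0) := by
  by_cases hf0 : ∀ x, f x = 0
  · exact Or.inl hf0
  obtain ⟨x₀, hx₀⟩ := not_forall.mp hf0
  have hg_near : g =ᶠ[𝓝 x₀] 0 := by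
    filter_upwards [(hf x₀ (mem_univ _)).continuousAt.eventually_ne hx₀] with x hx
    exact (mul_eq_zero.mp (hfg x)).resolve_left hx
  exact Or.inr fun x =>
    hg.eqOn_zero_of_preconnected_of_eventuallyEq_zero isPreconnected_univ (mem_univ x₀)
      hg_near (mem_univ x)

/-- If smooth ξ, η : ℂ → ℂ satisfy the conformality identity
ξ_z̄ ξ̄_z̄ + η_z̄ η̄_z̄ = 0 and the isotropy identity ξ_z̄z̄ ξ̄_z̄z̄ + η_z̄z̄ η̄_z̄z̄ = 0, then
(ξ̄_z̄z̄ η̄_z̄ − η̄_z̄z̄ ξ̄_z̄)(ξ_z̄z̄ η̄_z̄ − η̄_z̄z̄ ξ_z̄) = 0 on ℂ; if moreover ξ, η are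
real-analytic, then one of the two factors vanishes identically. -/
theorem statement10 (ξ η : ℂ → ℂ)
    (hξ : ContDiff ℝ (⊤ : ℕ∞) ξ) (hη : ContDiff ℝ (⊤ : ℕ∞) η)
    (hconf : ∀ z : ℂ,
      wd ξ z * wd (fun t => conj' (ξ t)) z + wd η z * wd (fun t => conj' (η t)) z = 0)
    (hiso : ∀ z : ℂ,
      wd (wd ξ) z * wd (wd (fun t => conj' (ξ t))) z +
        wd (wd η) z * wd (wd (fun t => conj' (η t))) z = 0) :
    (∀ z : ℂ,
      (wd (wd (fun t => conj' (ξ t))) z * wd (fun t => conj' (η t)) z -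
          wd (wd (fun t => conj' (η t))) z * wd (fun t => conj' (ξ t)) z) *
        (wd (wd ξ) z * wd (fun t => conj' (η t)) z -
          wd (wd (fun t => conj' (η t))) z * wd ξ z) = 0) ∧
    ((∀ z : ℂ, AnalyticAt ℝ ξ z) → (∀ z : ℂ, AnalyticAt ℝ η z) →
      ((∀ z : ℂ,
          wd (wd (fun t => conj' (ξ t))) z * wd (fun t => conj' (η t)) z -
            wd (wd (fun t => conj' (η t))) z * wd (fun t => conj' (ξ t)) z = 0) ∨
        (∀ z : ℂ,
          wd (wd ξ) z * wd (fun t => conj' (η t)) z -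
            wd (wd (fun t => conj' (η t))) z * wd ξ z = 0))) := by
  have hd : ∀ {f : ℂ → ℂ}, ContDiff ℝ (⊤ : ℕ∞) f → Differentiable ℝ (wd f) :=
    fun hf => (hf.wd (m := 1) (WithTop.coe_le_coe.2 le_top)).differentiable one_ne_zero
  have hderiv := wd_mul_add_mul_of_eq_zero (hd hξ) (hd hξ.conj') (hd hη) (hd hη.conj') hconf
  have hprod := fun z => cross_mul_cross_eq_zero_of_isotropic (hconf z) (hderiv z) (hiso z)
  refine ⟨hprod, fun haξ haη => ?_⟩
  refine AnalyticOnNhd.eq_zero_or_eq_zero_of_mul_eq_zero_univ (𝕜 := ℝ) (fun z _ => ?_)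
    (fun z _ => ?_) hprod
  · exact ((haξ z).conj'.wd.wd.mul (haη z).conj'.wd).sub
      ((haη z).conj'.wd.wd.mul (haξ z).conj'.wd)
  · exact ((haξ z).wd.wd.mul (haη z).conj'.wd).sub ((haη z).conj'.wd.wd.mul (haξ z).wd)
end
end
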